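/- Let X be a nontrivial real Banach space. Then the function t ↦ C_Z^I(t) is continuous on the interval [0, 1/2]. -/

import Mathlib

open Set

/-- `C_Z^I(t)`: the sup of `‖t•x + (1-t)•y‖ * ‖(1-t)•x + t•y‖ / ‖x+y‖²` over
pairs `(x, y) ≠ (0, 0)` that are isosceles orthogonal (`‖x+y‖ = ‖x-y‖`). -/
noncomputable def CZI (X : Type*) [NormedAddCommGroup X] [NormedSpace ℝ X] (t : ℝ) : ℝ :=
  sSup { r : ℝ | ∃ x y : X, (x, y) ≠ (0, 0) ∧ ‖x + y‖ = ‖x - y‖ ∧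
    r = ‖t • x + (1 - t) • y‖ * ‖(1 - t) • x + t • y‖ / ‖x + y‖ ^ 2 }

/-!
For isosceles orthogonal `x, y` the identity `2x = (x + y) + (x - y)` gives `‖x‖, ‖y‖ ≤ ‖x + y‖`,
so every `‖u • x + (1 - u) • y‖` with `u ∈ [0, 1]` is at most `‖x + y‖`. Moreover
`u ↦ u • x + (1 - u) • y` moves with speed `‖x - y‖ = ‖x + y‖`. Hence each ratio in the definition
of `C_Z^I(t)` is `2`-Lipschitz in `t ∈ [0, 1]` uniformly in `(x, y)`, and so is their supremum.
-/

section IsoscelesOrthogonal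

variable {X : Type*} [NormedAddCommGroup X] [NormedSpace ℝ X] {x y : X}

lemma norm_le_norm_add_of_norm_add_eq_norm_sub (h : ‖x + y‖ = ‖x - y‖) : ‖x‖ ≤ ‖x + y‖ := by
  have h2 : (2 : ℝ) • x = (x + y) + (x - y) := by module
  have := norm_add_le (x + y) (x - y)
  rw [← h2, norm_smul, Real.norm_ofNat, ← h] at this
  linarith

lemma norm_smul_add_one_sub_smul_le (h : ‖x + y‖ = ‖x - y‖) {u : ℝ} (hu : u ∈ Icc (0 : ℝ) 1) :
    ‖u • x + (1 - u) • y‖ ≤ ‖x + y‖ := by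
  have hx := norm_le_norm_add_of_norm_add_eq_norm_sub h
  have hy : ‖y‖ ≤ ‖x + y‖ := by
    rw [add_comm] at h ⊢
    exact norm_le_norm_add_of_norm_add_eq_norm_sub (h.trans (norm_sub_rev x y))
  have hu' : 0 ≤ 1 - u := sub_nonneg.2 hu.2
  calc ‖u • x + (1 - u) • y‖ ≤ u * ‖x‖ + (1 - u) * ‖y‖ := by
        refine (norm_add_le _ _).trans_eq ?_
        rw [norm_smul_of_nonneg hu.1, norm_smul_of_nonneg hu']
    _ ≤ u * ‖x + y‖ + (1 - u) * ‖x + y‖ := by gcongr; exact hu.1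
    _ = ‖x + y‖ := by ring

lemma norm_smul_add_one_sub_smul_le_add (h : ‖x + y‖ = ‖x - y‖) (t s : ℝ) :
    ‖t • x + (1 - t) • y‖ ≤ ‖s • x + (1 - s) • y‖ + |t - s| * ‖x + y‖ := by
  have h2 : t • x + (1 - t) • y = (s • x + (1 - s) • y) + (t - s) • (x - y) := by module
  rw [h2, h, ← Real.norm_eq_abs, ← norm_smul]
  exact norm_add_le _ _

end IsoscelesOrthogonal

lemma mul_le_mul_add_of_le_add {a b c d e M : ℝ} (hb : 0 ≤ b) (hc : 0 ≤ c) (he : 0 ≤ e)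
    (hac : a ≤ c + e) (hbd : b ≤ d + e) (hbM : b ≤ M) (hcM : c ≤ M) :
    a * b ≤ c * d + 2 * e * M := by
  nlinarith [mul_le_mul_of_nonneg_right hac hb, mul_le_mul_of_nonneg_left hbd hc,
    mul_le_mul_of_nonneg_left hbM he, mul_le_mul_of_nonneg_left hcM he]

section CZI

variable (X : Type*) [NormedAddCommGroup X] [NormedSpace ℝ X]

lemma CZI_nonneg (t : ℝ) : 0 ≤ CZI X t :=
  Real.sSup_nonneg fun _ ⟨_, _, _, _, hr⟩ => hr ▸ by positivity

variable {X}

lemma CZI_ratio_le_one {t : ℝ} (ht : t ∈ Icc (0 : ℝ) 1) {x y : X} (h : ‖x + y‖ = ‖x - y‖) :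
    ‖t • x + (1 - t) • y‖ * ‖(1 - t) • x + t • y‖ / ‖x + y‖ ^ 2 ≤ 1 := by
  have h₁ := norm_smul_add_one_sub_smul_le h ht
  have h₂ := norm_smul_add_one_sub_smul_le h (Icc.mem_iff_one_sub_mem.1 ht)
  rw [sub_sub_cancel] at h₂
  refine div_le_one_of_le₀ ?_ (by positivity)
  rw [sq]
  exact mul_le_mul h₁ h₂ (norm_nonneg _) (norm_nonneg _)

lemma bddAbove_CZI_set {t : ℝ} (ht : t ∈ Icc (0 : ℝ) 1) :
    BddAbove { r : ℝ | ∃ x y : X, (x, y) ≠ (0, 0) ∧ ‖x + y‖ = ‖x - y‖ ∧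
      r = ‖t • x + (1 - t) • y‖ * ‖(1 - t) • x + t • y‖ / ‖x + y‖ ^ 2 } :=
  ⟨1, fun _ ⟨_, _, _, h, hr⟩ => hr ▸ CZI_ratio_le_one ht h⟩

lemma CZI_ratio_le_add {t s : ℝ} (ht : t ∈ Icc (0 : ℝ) 1) (hs : s ∈ Icc (0 : ℝ) 1) {x y : X}
    (h : ‖x + y‖ = ‖x - y‖) :
    ‖t • x + (1 - t) • y‖ * ‖(1 - t) • x + t • y‖ / ‖x + y‖ ^ 2 ≤
      ‖s • x + (1 - s) • y‖ * ‖(1 - s) • x + s • y‖ / ‖x + y‖ ^ 2 + 2 * |t - s| := by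
  have hb := norm_smul_add_one_sub_smul_le h (Icc.mem_iff_one_sub_mem.1 ht)
  have hbd := norm_smul_add_one_sub_smul_le_add h (1 - t) (1 - s)
  rw [sub_sub_cancel] at hb
  rw [sub_sub_cancel, sub_sub_cancel, sub_sub_sub_cancel_left, abs_sub_comm] at hbd
  have key := mul_le_mul_add_of_le_add (norm_nonneg _) (norm_nonneg _)
    (mul_nonneg (abs_nonneg (t - s)) (norm_nonneg (x + y)))
    (norm_smul_add_one_sub_smul_le_add h t s) hbd hb (norm_smul_add_one_sub_smul_le h hs)
  set A := ‖s • x + (1 - s) • y‖ * ‖(1 - s) • x + s • y‖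
  set M := ‖x + y‖
  -- `M = 0` needs no separate case: `0 / 0 = 0` keeps `M ^ 2 / M ^ 2 ≤ 1`
  calc _ ≤ (A + 2 * |t - s| * M ^ 2) / M ^ 2 := by
        gcongr
        linarith
    _ = A / M ^ 2 + 2 * |t - s| * (M ^ 2 / M ^ 2) := by ring
    _ ≤ A / M ^ 2 + 2 * |t - s| := by
        have : (0 : ℝ) ≤ 2 * |t - s| := by positivity
        exact add_le_add_right (mul_le_of_le_one_right this (div_self_le_one (M ^ 2))) _

lemma CZI_le_add {t s : ℝ} (ht : t ∈ Icc (0 : ℝ) 1) (hs : s ∈ Icc (0 : ℝ) 1) :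
    CZI X t ≤ CZI X s + 2 * |t - s| := by
  refine Real.sSup_le ?_ (add_nonneg (CZI_nonneg X s) (by positivity))
  rintro _ ⟨x, y, hxy, h, rfl⟩
  exact (CZI_ratio_le_add ht hs h).trans
    (add_le_add_left (le_csSup (bddAbove_CZI_set hs) ⟨x, y, hxy, h, rfl⟩) _)

lemma lipschitzOnWith_CZI : LipschitzOnWith 2 (CZI X) (Icc 0 1) :=
  LipschitzOnWith.of_le_add_mul 2 fun _ ht _ hs => by
    simpa [Real.dist_eq] using CZI_le_add ht hs

end CZI

theorem stmt_17_general (X : Type*) [NormedAddCommGroup X] [NormedSpace ℝ X] :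
    ContinuousOn (fun t : ℝ => CZI X t) (Icc (0 : ℝ) (1 / 2)) :=
  lipschitzOnWith_CZI.continuousOn.mono (Icc_subset_Icc le_rfl (by norm_num))

theorem stmt_17 (X : Type*) [NormedAddCommGroup X] [NormedSpace ℝ X]
    [CompleteSpace X] [Nontrivial X] :
    ContinuousOn (fun t : ℝ => CZI X t) (Icc (0 : ℝ) (1 / 2)) :=
  stmt_17_general X
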